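/- arXiv:2504.17682 — 4 statements merged into one kernel-verified Lean document; each statement's English description precedes it below -/
import Mathlib

section
/- If finitely many real sequences (a_k^i)_{k∈ℕ}, i = 1,…,ℓ, are such that not all of them converge to zero, then there exist an index s ∈ {1,…,ℓ} and an infinite subset K ⊆ ℕ such that for every i, the sequence (a_k^i / |a_k^s|)_{k∈K} converges to a finite limit z_i (in particular |a_k^s| > 0 for k ∈ K and all these quotient sequences are bounded). -/
/-!
On infinitely many indices `k` the sequence `a j` stays away from zero. Among these, by
pigeonhole, a single index `s` realizes `max_i |a_k^i|` infinitely often; there `|a_k^s| > 0`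
and every quotient `a_k^i / |a_k^s|` lies in `[-1, 1]`. The vectors of quotients then live in a
compact cube, and a convergent subsequence supplies `K`.
-/

open Filter Set

theorem StrictMono.map_atTop_eq_inf_principal_range {ψ : ℕ → ℕ} (hψ : StrictMono ψ) :
    map ψ atTop = atTop ⊓ 𝓟 (range ψ) := by
  apply le_antisymm
  · exact le_inf hψ.tendsto_atTop (le_principal_iff.mpr range_mem_map)
  · intro S hS
    obtain ⟨N, hN⟩ := eventually_atTop.mp (mem_map.mp hS)
    refine mem_of_superset (inter_mem_inf (Ici_mem_atTop (ψ N)) (mem_principal_self _)) ?_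
    rintro _ ⟨hle, m, rfl⟩
    exact hN m (hψ.le_iff_le.mp hle)

theorem IsCompact.exists_infinite_subset_tendsto {X : Type*} [TopologicalSpace X]
    [FirstCountableTopology X] {C : Set X} (hC : IsCompact C) {u : ℕ → X} {S : Set ℕ}
    (hS : S.Infinite) (huS : ∀ k ∈ S, u k ∈ C) :
    ∃ K ⊆ S, K.Infinite ∧ ∃ x ∈ C, Tendsto u (atTop ⊓ 𝓟 K) (nhds x) := by
  classical
  have : Infinite S := hS.to_subtype
  let e := Nat.orderEmbeddingOfSet S
  have he : ∀ n, e n ∈ S := fun n => Nat.orderEmbeddingOfSet_range S ▸ mem_range_self n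
  obtain ⟨x, hxC, φ, hφ, hlim⟩ := hC.tendsto_subseq fun n => huS _ (he n)
  have hψ : StrictMono (e ∘ φ) := e.strictMono.comp hφ
  refine ⟨range (e ∘ φ), range_subset_iff.mpr fun n => he (φ n),
    infinite_range_of_injective hψ.injective, x, hxC, ?_⟩
  rwa [← hψ.map_atTop_eq_inf_principal_range, tendsto_map'_iff]

theorem Set.Infinite.exists_infinite_setOf_isMax {ι α : Type*} [Finite ι] [Nonempty ι]
    [LinearOrder α] (f : ι → ℕ → α) {S : Set ℕ} (hS : S.Infinite) :
    ∃ s, {k ∈ S | ∀ i, f i k ≤ f s k}.Infinite := by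
  by_contra! hfin
  refine hS (finite_iUnion hfin |>.subset fun k hk => ?_)
  obtain ⟨s, hs⟩ := Finite.exists_max (f · k)
  exact mem_iUnion.mpr ⟨s, hk, hs⟩

theorem stmt_3 (ℓ : ℕ) (a : Fin ℓ → ℕ → ℝ)
    (hnot : ∃ j : Fin ℓ, ∃ Kj : Set ℕ, ∃ abar : ℝ, Kj.Infinite ∧ 0 < abar ∧
      ∀ k ∈ Kj, abar < |a j k|) :
    ∃ s : Fin ℓ, ∃ K : Set ℕ, K.Infinite ∧ (∀ k ∈ K, 0 < |a s k|) ∧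
      ∀ i : Fin ℓ, ∃ z : ℝ,
        Tendsto (fun k => a i k / |a s k|) (atTop ⊓ 𝓟 K) (nhds z) := by
  obtain ⟨j, Kj, abar, hKj, habar, hbig⟩ := hnot
  have : Nonempty (Fin ℓ) := ⟨j⟩
  obtain ⟨s, hK₁⟩ := hKj.exists_infinite_setOf_isMax (fun i k => |a i k|)
  set K₁ := {k ∈ Kj | ∀ i, |a i k| ≤ |a s k|}
  have hpos : ∀ k ∈ K₁, 0 < |a s k| := fun k hk =>
    habar.trans ((hbig k hk.1).trans_le (hk.2 j))
  have hquot : ∀ k ∈ K₁, (fun i => a i k / |a s k|) ∈ Metric.closedBall 0 1 := by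
    intro k hk
    rw [mem_closedBall_zero_iff, pi_norm_le_iff_of_nonneg zero_le_one]
    intro i
    rw [Real.norm_eq_abs, abs_div, abs_abs, div_le_one (hpos k hk)]
    exact hk.2 i
  obtain ⟨K, hKK₁, hK, z, -, hz⟩ :=
    (isCompact_closedBall (0 : Fin ℓ → ℝ) 1).exists_infinite_subset_tendsto hK₁ hquot
  exact ⟨s, K, hK, fun k hk => hpos k (hKK₁ hk), fun i => ⟨z i, tendsto_pi_nhds.mp hz i⟩⟩
end

section
/- Let (x_k) be a sequence in the polyhedron X = {x : A x ≤ b} converging to x* ∈ X. Then there exists ε* > 0 such that for every ε ∈ (0, ε*] there is k_ε ∈ ℕ with: for all k ≥ k_ε, the set of ε-active constraint indices at x_k equals the set of active constraint indices at x*, i.e. {i : aᵢᵀ x_k ≥ bᵢ − ε} = {i : aᵢᵀ x* = bᵢ}. -/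
/-!
Each constraint value `aᵢᵀ x_k` converges to `aᵢᵀ x*`. An active constraint at `x*` is therefore
eventually `ε`-active along the sequence for every `ε > 0`, while an inactive one has a positive
slack `bᵢ - aᵢᵀ x*`; any `ε` below the smallest of these finitely many slacks eventually excludes
all inactive constraints.
-/

open Filter Topology Set

theorem eventually_sub_le_iff_eq {α : Type*} {l : Filter α} {u : α → ℝ} {L c ε : ℝ}
    (hu : Tendsto u l (𝓝 L)) (hLc : L ≤ c) (hε : 0 < ε) (hεslack : L < c → ε < c - L) :
    ∀ᶠ a in l, (c - ε ≤ u a ↔ L = c) := by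
  rcases hLc.eq_or_lt with hLc | hLc
  · filter_upwards [hu.eventually (eventually_gt_nhds (by linarith : c - ε < L))] with a ha
    simp only [hLc, iff_true]
    linarith
  · filter_upwards [hu.eventually (eventually_lt_nhds (by linarith [hεslack hLc] : L < c - ε))]
      with a ha
    simp only [hLc.ne, iff_false, not_le]
    exact ha

theorem exists_pos_eventually_setOf_sub_le_eq {α ι : Type*} [Finite ι] {l : Filter α}
    {u : α → ι → ℝ} {L c : ι → ℝ} (hu : ∀ i, Tendsto (fun a => u a i) l (𝓝 (L i)))
    (hLc : L ≤ c) :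
    ∃ εstar > (0 : ℝ), ∀ ε ∈ Ioc 0 εstar, ∀ᶠ a in l, {i | c i - ε ≤ u a i} = {i | L i = c i} := by
  have hslack : ∀ᶠ ε in 𝓝[>] (0 : ℝ), ∀ i, L i < c i → ε < c i - L i := by
    refine eventually_all.2 fun i => ?_
    by_cases hi : L i < c i
    · exact (eventually_lt_nhds (sub_pos.2 hi)).filter_mono nhdsWithin_le_nhds
        |>.mono fun ε hε _ => hε
    · exact Eventually.of_forall fun ε h => absurd h hi
  obtain ⟨εstar, hεstar, hsub⟩ := mem_nhdsGT_iff_exists_Ioc_subset.1 hslack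
  refine ⟨εstar, hεstar, fun ε hε => ?_⟩
  have hiff : ∀ᶠ a in l, ∀ i, (c i - ε ≤ u a i ↔ L i = c i) :=
    eventually_all.2 fun i => eventually_sub_le_iff_eq (hu i) (hLc i) hε.1 (hsub hε i)
  filter_upwards [hiff] with a ha
  ext i
  exact ha i

theorem stmt_5_general (n q : ℕ) (A : Matrix (Fin q) (Fin n) ℝ) (b : Fin q → ℝ)
    (x : ℕ → (Fin n → ℝ)) (xstar : Fin n → ℝ)
    (hxs : ∀ i, (∑ j, A i j * xstar j) ≤ b i)
    (hconv : Tendsto x atTop (nhds xstar)) :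
    ∃ εstar > (0:ℝ), ∀ ε ∈ Set.Ioc 0 εstar, ∃ kε : ℕ, ∀ k ≥ kε,
      {i : Fin q | b i - ε ≤ ∑ j, A i j * x k j} =
        {i : Fin q | (∑ j, A i j * xstar j) = b i} := by
  have hlim : ∀ i, Tendsto (fun k => ∑ j, A i j * x k j) atTop (𝓝 (∑ j, A i j * xstar j)) :=
    fun i => tendsto_finsetSum _ fun j _ => (tendsto_pi_nhds.1 hconv j).const_mul (A i j)
  obtain ⟨εstar, hεstar, hev⟩ := exists_pos_eventually_setOf_sub_le_eq hlim hxs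
  exact ⟨εstar, hεstar, fun ε hε => eventually_atTop.1 (hev ε hε)⟩

theorem stmt_5 (n q : ℕ) (A : Matrix (Fin q) (Fin n) ℝ) (b : Fin q → ℝ)
    (x : ℕ → (Fin n → ℝ)) (xstar : Fin n → ℝ)
    (hxk : ∀ k, ∀ i, (∑ j, A i j * x k j) ≤ b i)
    (hxs : ∀ i, (∑ j, A i j * xstar j) ≤ b i)
    (hconv : Tendsto x atTop (nhds xstar)) :
    ∃ εstar > (0:ℝ), ∀ ε ∈ Set.Ioc 0 εstar, ∃ kε : ℕ, ∀ k ≥ kε,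
      {i : Fin q | b i - ε ≤ ∑ j, A i j * x k j} =
        {i : Fin q | (∑ j, A i j * xstar j) = b i} :=
  stmt_5_general n q A b x xstar hxs hconv
end

section
/- Let g : ℝⁿ → ℝ be Lipschitz with constant L and let (x_k) be a sequence with g(x_k) < 0, and (y_k) with y_k = x_k + t_k d_k where ‖d_k‖ = 1, t_k ∈ [0, g(x_k)²/θ] for a fixed θ > 0. If |g(x_k)| → 0, then g(x_k)/g(y_k) → 1; consequently there exists a constant c₂ > 0 such that 1/|g(y_k)| ≤ c₂ / |g(x_k)| for all sufficiently large k. -/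
/-!
Moving from `x` a distance at most `g(x)² / θ` changes the `L`-Lipschitz function `g` by at most
`(|L| / θ) g(x)²`, so `g(y) / g(x) = 1 + O(|g(x)|) → 1`. Inverting gives the first claim, and once
`g(y) / g(x) > 1 / 2` we get `|g(y)| > |g(x)| / 2`, which is the second claim with `c₂ = 2`.
-/

open Filter Topology

lemma abs_apply_add_smul_sub_le {E : Type*} [SeminormedAddCommGroup E] [NormedSpace ℝ E]
    {g : E → ℝ} {L : ℝ} (hg : ∀ a b, |g a - g b| ≤ L * ‖a - b‖) {x d : E} (hd : ‖d‖ = 1)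
    {t s : ℝ} (ht : t ∈ Set.Icc 0 s) : |g (x + t • d) - g x| ≤ |L| * s :=
  calc |g (x + t • d) - g x| ≤ L * ‖x + t • d - x‖ := hg _ _
    _ = L * t := by rw [add_sub_cancel_left, norm_smul, hd, mul_one, Real.norm_of_nonneg ht.1]
    _ ≤ |L| * t := mul_le_mul_of_nonneg_right (le_abs_self L) ht.1
    _ ≤ |L| * s := mul_le_mul_of_nonneg_left ht.2 (abs_nonneg L)

lemma tendsto_div_of_abs_sub_le_mul_sq {ι : Type*} {l : Filter ι} {u v : ι → ℝ} {C : ℝ}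
    (hu : ∀ i, u i ≠ 0) (huv : ∀ i, |v i - u i| ≤ C * u i ^ 2)
    (hlim : Tendsto (fun i => |u i|) l (𝓝 0)) :
    Tendsto (fun i => v i / u i) l (𝓝 1) := by
  have hbound : ∀ i, ‖v i / u i - 1‖ ≤ C * |u i| := fun i => by
    have hui : 0 < |u i| := abs_pos.mpr (hu i)
    calc ‖v i / u i - 1‖ = |v i - u i| / |u i| := by
          rw [Real.norm_eq_abs, div_sub_one (hu i), abs_div]
      _ ≤ C * u i ^ 2 / |u i| := div_le_div_of_nonneg_right (huv i) hui.le
      _ = C * |u i| := by rw [← sq_abs]; field_simp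
  have hzero : Tendsto (fun i => v i / u i - 1) l (𝓝 0) :=
    squeeze_zero_norm hbound (by simpa using hlim.const_mul C)
  simpa using hzero.add_const 1

lemma one_div_abs_le_two_div_abs {u v : ℝ} (hu : u ≠ 0) (h : 1 / 2 < v / u) :
    1 / |v| ≤ 2 / |u| := by
  have hratio : v / u = |v| / |u| := by
    rw [← abs_div, abs_of_pos (one_half_pos.trans h)]
  have hu' : 0 < |u| := abs_pos.mpr hu
  rw [hratio, lt_div_iff₀ hu'] at h
  rw [div_le_div_iff₀ (by linarith) hu']
  linarith

theorem stmt_13_general (n : ℕ) (g : EuclideanSpace ℝ (Fin n) → ℝ) (L : ℝ)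
    (hLip : ∀ x y, |g x - g y| ≤ L * ‖x - y‖) (θ : ℝ)
    (x d : ℕ → EuclideanSpace ℝ (Fin n)) (t : ℕ → ℝ)
    (hd : ∀ k, ‖d k‖ = 1)
    (ht : ∀ k, t k ∈ Set.Icc 0 ((g (x k)) ^ 2 / θ))
    (y : ℕ → EuclideanSpace ℝ (Fin n)) (hy : ∀ k, y k = x k + t k • d k)
    (hgx : ∀ k, g (x k) < 0)
    (hlim : Tendsto (fun k => |g (x k)|) atTop (nhds 0)) :
    Tendsto (fun k => g (x k) / g (y k)) atTop (nhds 1) ∧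
      ∃ c₂ > (0:ℝ), ∀ᶠ k in atTop, 1 / |g (y k)| ≤ c₂ / |g (x k)| := by
  have hstep : ∀ k, |g (y k) - g (x k)| ≤ |L| / θ * g (x k) ^ 2 := fun k => by
    rw [hy k, div_mul_eq_mul_div, mul_div_assoc]
    exact abs_apply_add_smul_sub_le hLip (hd k) (ht k)
  have hratio : Tendsto (fun k => g (y k) / g (x k)) atTop (𝓝 1) :=
    tendsto_div_of_abs_sub_le_mul_sq (fun k => (hgx k).ne) hstep hlim
  refine ⟨by simpa using hratio.inv₀ one_ne_zero, 2, two_pos, ?_⟩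
  filter_upwards [hratio.eventually (lt_mem_nhds one_half_lt_one)] with k hk
  exact one_div_abs_le_two_div_abs (hgx k).ne hk

theorem stmt_13 (n : ℕ) (g : EuclideanSpace ℝ (Fin n) → ℝ) (L : ℝ)
    (hLip : ∀ x y, |g x - g y| ≤ L * ‖x - y‖) (θ : ℝ) (hθ : 0 < θ)
    (x d : ℕ → EuclideanSpace ℝ (Fin n)) (t : ℕ → ℝ)
    (hd : ∀ k, ‖d k‖ = 1)
    (ht : ∀ k, t k ∈ Set.Icc 0 ((g (x k)) ^ 2 / θ))
    (y : ℕ → EuclideanSpace ℝ (Fin n)) (hy : ∀ k, y k = x k + t k • d k)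
    (hgx : ∀ k, g (x k) < 0) (hgy : ∀ k, g (y k) < 0)
    (hlim : Tendsto (fun k => |g (x k)|) atTop (nhds 0)) :
    Tendsto (fun k => g (x k) / g (y k)) atTop (nhds 1) ∧
      ∃ c₂ > (0:ℝ), ∀ᶠ k in atTop, 1 / |g (y k)| ≤ c₂ / |g (x k)| :=
  stmt_13_general n g L hLip θ x d t hd ht y hy hgx hlim
end

section
/- Let h : ℝⁿ → ℝ be continuously differentiable with ‖∇h‖ bounded by c on a region containing all points considered. Let ν ∈ (1,2], β > 1, θ ∈ (0,1), and sequences ρ_k > 0 with ρ_k → 0, α_k ≤ ρ_k^β/θ, x_k ∈ ℝⁿ, and y_k = x_k + s_k d_k with ‖d_k‖ = 1 and 0 ≤ s_k ≤ α_k. Then ν |h(x_k)/ρ_k|^{ν−1} − ν |h(y_k)/ρ_k|^{ν−1} → 0 as k → ∞. -/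
/-!
The Lipschitz bound `|h x_k - h y_k| ≤ c s_k ≤ c ρ_k^β / θ` makes the difference of the scaled
values `h x_k / ρ_k - h y_k / ρ_k` at most `(c / θ) ρ_k^(β-1)`, which tends to `0` since `β > 1`.
Since `t ↦ |t|^p` is `p`-Hölder for `p = ν - 1 ∈ (0, 1]`, the difference of the powers tends to `0`
as well.
-/

open Filter Topology

namespace Real

lemma abs_rpow_sub_rpow_le {a b p : ℝ} (ha : 0 ≤ a) (hb : 0 ≤ b) (hp : 0 ≤ p) (hp1 : p ≤ 1) :
    |a ^ p - b ^ p| ≤ |a - b| ^ p := by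
  wlog hba : b ≤ a generalizing a b
  · simpa only [abs_sub_comm] using this hb ha (le_of_not_ge hba)
  have hsub : a ^ p ≤ b ^ p + (a - b) ^ p := by
    simpa only [add_sub_cancel] using rpow_add_le_add_rpow hb (sub_nonneg.2 hba) hp hp1
  have hmono : b ^ p ≤ a ^ p := rpow_le_rpow hb hba hp
  rw [abs_of_nonneg (sub_nonneg.2 hmono), abs_of_nonneg (sub_nonneg.2 hba)]
  linarith

lemma abs_abs_rpow_sub_abs_rpow_le (u v : ℝ) {p : ℝ} (hp : 0 ≤ p) (hp1 : p ≤ 1) :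
    |(|u| ^ p - |v| ^ p)| ≤ |u - v| ^ p :=
  (abs_rpow_sub_rpow_le (abs_nonneg u) (abs_nonneg v) hp hp1).trans
    (rpow_le_rpow (abs_nonneg _) (abs_abs_sub_abs_le_abs_sub u v) hp)

end Real

lemma Filter.Tendsto.abs_rpow_sub_abs_rpow {ι : Type*} {l : Filter ι} {u v : ι → ℝ} {p : ℝ}
    (huv : Tendsto (fun i => u i - v i) l (𝓝 0)) (hp : 0 < p) (hp1 : p ≤ 1) :
    Tendsto (fun i => |u i| ^ p - |v i| ^ p) l (𝓝 0) := by
  have hbound : Tendsto (fun i => |u i - v i| ^ p) l (𝓝 0) := by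
    simpa [Real.zero_rpow hp.ne'] using huv.abs.rpow_const (Or.inr hp.le)
  exact squeeze_zero_norm (fun i => Real.abs_abs_rpow_sub_abs_rpow_le _ _ hp.le hp1) hbound

lemma abs_div_sub_div_le_of_abs_sub_le {a b c s ρ β θ : ℝ} (hab : |a - b| ≤ c * s)
    (hc : 0 ≤ c) (hρ : 0 < ρ) (hs : s ≤ ρ ^ β / θ) :
    |a / ρ - b / ρ| ≤ c / θ * ρ ^ (β - 1) := by
  rw [div_sub_div_same, abs_div, abs_of_pos hρ, div_le_iff₀ hρ]
  calc |a - b| ≤ c * (ρ ^ β / θ) := hab.trans (mul_le_mul_of_nonneg_left hs hc)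
    _ = c / θ * ρ ^ (β - 1) * ρ := by
      rw [Real.rpow_sub hρ, Real.rpow_one]
      field_simp

theorem stmt_14_general (n : ℕ) (h : EuclideanSpace ℝ (Fin n) → ℝ)
    (hC1 : ContDiff ℝ 1 h) (c : ℝ) (hgrad : ∀ x, ‖fderiv ℝ h x‖ ≤ c)
    (ν β θ : ℝ) (hν : ν ∈ Set.Ioc (1:ℝ) 2) (hβ : 1 < β)
    (ρ α s : ℕ → ℝ) (hρpos : ∀ k, 0 < ρ k) (hρ0 : Tendsto ρ atTop (nhds 0))
    (hα : ∀ k, α k ≤ ρ k ^ β / θ)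
    (x d : ℕ → EuclideanSpace ℝ (Fin n)) (hd : ∀ k, ‖d k‖ = 1)
    (hs : ∀ k, s k ∈ Set.Icc 0 (α k))
    (y : ℕ → EuclideanSpace ℝ (Fin n)) (hy : ∀ k, y k = x k + s k • d k) :
    Tendsto (fun k => ν * |h (x k) / ρ k| ^ (ν - 1) - ν * |h (y k) / ρ k| ^ (ν - 1))
      atTop (nhds 0) := by
  have hc : 0 ≤ c := (norm_nonneg _).trans (hgrad 0)
  have hlip : ∀ k, |h (x k) - h (y k)| ≤ c * s k := fun k => by
    have := Convex.norm_image_sub_le_of_norm_fderiv_le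
      (fun z _ => (hC1.differentiable one_ne_zero).differentiableAt) (fun z _ => hgrad z)
      convex_univ (Set.mem_univ (y k)) (Set.mem_univ (x k))
    simpa [hy k, norm_smul, hd k, abs_of_nonneg (hs k).1] using this
  have hbound : Tendsto (fun k => c / θ * ρ k ^ (β - 1)) atTop (𝓝 0) := by
    simpa [Real.zero_rpow (sub_pos.2 hβ).ne'] using
      (hρ0.rpow_const (Or.inr (sub_pos.2 hβ).le)).const_mul (c / θ)
  have hscaled : Tendsto (fun k => h (x k) / ρ k - h (y k) / ρ k) atTop (𝓝 0) :=
    squeeze_zero_norm (fun k => abs_div_sub_div_le_of_abs_sub_le (hlip k) hc (hρpos k)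
      ((hs k).2.trans (hα k))) hbound
  simpa only [mul_sub, mul_zero] using
    (hscaled.abs_rpow_sub_abs_rpow (by linarith [hν.1]) (by linarith [hν.2])).const_mul ν

theorem stmt_14 (n : ℕ) (h : EuclideanSpace ℝ (Fin n) → ℝ)
    (hC1 : ContDiff ℝ 1 h) (c : ℝ) (hgrad : ∀ x, ‖fderiv ℝ h x‖ ≤ c)
    (ν β θ : ℝ) (hν : ν ∈ Set.Ioc (1:ℝ) 2) (hβ : 1 < β) (hθ : θ ∈ Set.Ioo (0:ℝ) 1)
    (ρ α s : ℕ → ℝ) (hρpos : ∀ k, 0 < ρ k) (hρ0 : Tendsto ρ atTop (nhds 0))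
    (hα : ∀ k, α k ≤ ρ k ^ β / θ)
    (x d : ℕ → EuclideanSpace ℝ (Fin n)) (hd : ∀ k, ‖d k‖ = 1)
    (hs : ∀ k, s k ∈ Set.Icc 0 (α k))
    (y : ℕ → EuclideanSpace ℝ (Fin n)) (hy : ∀ k, y k = x k + s k • d k) :
    Tendsto (fun k => ν * |h (x k) / ρ k| ^ (ν - 1) - ν * |h (y k) / ρ k| ^ (ν - 1))
      atTop (nhds 0) :=
  stmt_14_general n h hC1 c hgrad ν β θ hν hβ ρ α s hρpos hρ0 hα x d hd hs y hy
end
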